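/- Kronecker's theorem: if α is a nonzero algebraic integer all of whose Galois conjugates (roots of its minimal polynomial over ℚ) have complex absolute value 1, then α is a root of unity. -/

import Mathlib

/-!
Every complex embedding of the number field `ℚ⟮α⟯` sends `α` to a root of its minimal polynomial,
so all images of `α` have absolute value 1. The powers of `α` are then algebraic integers of bounded
degree whose conjugates are bounded, so only finitely many of them are distinct, and two of them
coincide (`NumberField.Embeddings.pow_eq_one_of_norm_eq_one`).
-/

open IntermediateField Polynomial

theorem IntermediateField.aeval_algHom_adjoinSimpleGen_minpoly {F E L : Type*} [Field F]
    [Field E] [Field L] [Algebra F E] [Algebra F L] (α : E) (φ : F⟮α⟯ →ₐ[F] L) :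
    aeval (φ (AdjoinSimple.gen F α)) (minpoly F α) = 0 := by
  rw [← minpoly_gen, aeval_algHom_apply, minpoly.aeval, map_zero]

theorem IntermediateField.numberField_adjoin_simple {K : Type*} [Field K] [CharZero K] {α : K}
    (hα : IsIntegral ℚ α) : NumberField ℚ⟮α⟯ where
  to_finiteDimensional := adjoin.finiteDimensional hα

theorem kronecker_theorem_general (α : ℂ) (hint : IsIntegral ℤ α)
    (hconj : ∀ z : ℂ, Polynomial.aeval z (minpoly ℚ α) = 0 → ‖z‖ = 1) :
    ∃ n : ℕ, 0 < n ∧ α ^ n = 1 := by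
  have := numberField_adjoin_simple hint.tower_top
  have hgen : IsIntegral ℤ (AdjoinSimple.gen ℚ α) :=
    (isIntegral_algebraMap_iff (algebraMap ℚ⟮α⟯ ℂ).injective).mp hint
  obtain ⟨n, hn, hpow⟩ := NumberField.Embeddings.pow_eq_one_of_norm_eq_one ℚ⟮α⟯ ℂ hgen
    fun φ => hconj _ (aeval_algHom_adjoinSimpleGen_minpoly α φ.toRatAlgHom)
  exact ⟨n, hn, by simpa using congrArg (algebraMap ℚ⟮α⟯ ℂ) hpow⟩

theorem kronecker_theorem (α : ℂ) (hα0 : α ≠ 0) (hint : IsIntegral ℤ α)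
    (hconj : ∀ z : ℂ, Polynomial.aeval z (minpoly ℚ α) = 0 → ‖z‖ = 1) :
    ∃ n : ℕ, 0 < n ∧ α ^ n = 1 :=
  kronecker_theorem_general α hint hconj
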